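/- The vertex connectivity of the complement of GA(t,k)' equals (t-1)(k-1)+2, for t ≥ 3 and k ≥ 3. In particular, the complement graph is κ-optimal: its vertex connectivity equals its minimum degree. -/
import Mathlib



/-- `GA(t,k)'`: the Generalized Andrásfai graph `GA(t,k)` on `ℤ/(t(k-1)+2)ℤ` with the
edges of the exterior Hamiltonian cycle removed: vertices `i < j` are adjacent iff
`j - i ≡ 1 (mod t)` and `j - i ∉ {1, n-1}` where `n = t(k-1)+2`. -/
def GA' (t k : ℕ) : SimpleGraph (ZMod (t * (k - 1) + 2)) :=
  SimpleGraph.fromRel fun x y =>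
    (y - x).val % t = 1 % t ∧ (y - x).val ≠ 1 ∧ (y - x).val ≠ t * (k - 1) + 1

/-- The vertex connectivity of a finite graph: the least size of a vertex set whose
removal leaves a non-connected graph, with the convention `|V| - 1` for complete
graphs. -/
noncomputable def vConn {V : Type} [Fintype V] (G : SimpleGraph V) : ℕ :=
  sInf ({m | ∃ S : Finset V, S.card = m ∧
    ¬ (SimpleGraph.induce (↑S)ᶜ G).Connected} ∪ {Fintype.card V - 1})

section
variable {t k : ℕ}

lemma GA'_rel_iff (ht : 3 ≤ t) (hk : 3 ≤ k) (v : ℕ) (hv : v < t*(k-1)+2) :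
    (v % t = 1 % t ∧ v ≠ 1 ∧ v ≠ t * (k-1) + 1) ↔ ∃ j, 1 ≤ j ∧ j ≤ k-2 ∧ v = 1 + j*t := by
  have h1 : (1 : ℕ) % t = 1 := Nat.mod_eq_of_lt (by omega)
  constructor
  · rintro ⟨hmod, hne1, hnen⟩
    refine ⟨v / t, ?_, ?_, ?_⟩
    · rcases Nat.eq_zero_or_pos (v / t) with h | h
      · exfalso; have := Nat.div_add_mod v t
        rw [h, hmod, h1] at this; omega
      · exact h
    · have hd := Nat.div_add_mod v t
      rw [hmod, h1] at hd
      have h2 : v / t ≤ k - 1 := by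
        by_contra h3
        have h4 : k - 1 + 1 ≤ v / t := by omega
        have h5 : t * (k-1+1) ≤ t * (v/t) := Nat.mul_le_mul_left _ h4
        have h6 : t * (k-1+1) = t*(k-1) + t := by ring
        omega
      have h7 : v / t ≠ k - 1 := by
        intro h8; rw [h8] at hd; omega
      omega
    · have hd := Nat.div_add_mod v t
      rw [hmod, h1] at hd
      rw [Nat.mul_comm] at hd; omega
  · rintro ⟨j, hj1, hj2, rfl⟩
    have hp : 0 < j*t := Nat.mul_pos (by omega) (by omega)
    refine ⟨by rw [Nat.add_mul_mod_self_right], by omega, ?_⟩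
    have h1' : j*t ≤ (k-2)*t := Nat.mul_le_mul_right _ hj2
    have hk1 : k - 1 = (k-2) + 1 := by omega
    have h2 : (k-1)*t = (k-2)*t + t := by rw [hk1, add_mul, one_mul]
    have h3 : t*(k-1) = (k-1)*t := Nat.mul_comm _ _
    omega

lemma oneJT_lt (ht : 3 ≤ t) (hk : 3 ≤ k) {j : ℕ} (hj2 : j ≤ k - 2) :
    1 + j*t < t*(k-1)+2 := by
  have h1' : j*t ≤ (k-2)*t := Nat.mul_le_mul_right _ hj2
  have hk1 : k - 1 = (k-2) + 1 := by omega
  have h2 : (k-1)*t = (k-2)*t + t := by rw [hk1, add_mul, one_mul]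
  have h3 : t*(k-1) = (k-1)*t := Nat.mul_comm _ _
  omega

lemma GA'_adj (ht : 3 ≤ t) (hk : 3 ≤ k) [NeZero (t * (k-1) + 2)]
    (a b : ZMod (t * (k-1) + 2)) :
    (GA' t k).Adj a b ↔ ∃ j, 1 ≤ j ∧ j ≤ k-2 ∧ (b - a).val = 1 + j*t := by
  rw [GA', SimpleGraph.fromRel_adj]
  constructor
  · rintro ⟨hne, h | h⟩
    · exact (GA'_rel_iff ht hk _ (ZMod.val_lt _)).1 h
    · obtain ⟨j, hj1, hj2, hj⟩ := (GA'_rel_iff ht hk _ (ZMod.val_lt _)).1 h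
      have hab : a - b ≠ 0 := sub_ne_zero.mpr hne
      have hh : b - a = -(a - b) := by ring
      have hval : (b - a).val = t*(k-1)+2 - (a-b).val := by
        rw [hh, ZMod.neg_val, if_neg hab]
      refine ⟨k - 1 - j, by omega, by omega, ?_⟩
      rw [hval, hj]
      have h5 : (k-1-j)*t + j*t = (k-1)*t := by
        rw [← add_mul]; congr 1; omega
      have h3 : t*(k-1) = (k-1)*t := Nat.mul_comm _ _
      omega
  · rintro ⟨j, hj1, hj2, hj⟩
    have hne : a ≠ b := by
      intro h; subst h
      simp [ZMod.val_zero] at hj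
      omega
    exact ⟨hne, Or.inl ((GA'_rel_iff ht hk _ (ZMod.val_lt _)).2 ⟨j, hj1, hj2, hj⟩)⟩

variable (t k) in
def Dfin [NeZero (t * (k-1) + 2)] : Finset (ZMod (t * (k-1) + 2)) :=
  (Finset.Icc 1 (k-2)).image (fun j => ((1 + j*t : ℕ) : ZMod (t * (k-1) + 2)))

lemma mem_Dfin (ht : 3 ≤ t) (hk : 3 ≤ k) [NeZero (t * (k-1) + 2)]
    (x : ZMod (t * (k-1) + 2)) :
    x ∈ Dfin t k ↔ ∃ j, 1 ≤ j ∧ j ≤ k-2 ∧ x.val = 1 + j*t := by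
  simp only [Dfin, Finset.mem_image, Finset.mem_Icc]
  constructor
  · rintro ⟨j, ⟨hj1, hj2⟩, rfl⟩
    exact ⟨j, hj1, hj2, ZMod.val_cast_of_lt (oneJT_lt ht hk hj2)⟩
  · rintro ⟨j, hj1, hj2, hj⟩
    refine ⟨j, ⟨hj1, hj2⟩, ?_⟩
    apply ZMod.val_injective
    rw [ZMod.val_cast_of_lt (oneJT_lt ht hk hj2), hj]

lemma card_Dfin (ht : 3 ≤ t) (hk : 3 ≤ k) [NeZero (t * (k-1) + 2)] :
    (Dfin t k).card = k - 2 := by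
  rw [Dfin, Finset.card_image_of_injOn, Nat.card_Icc]; · omega
  intro i hi j hj hij
  simp only [Finset.coe_Icc, Set.mem_Icc] at hi hj
  have h1 := ZMod.val_cast_of_lt (n := t*(k-1)+2) (oneJT_lt ht hk hi.2)
  have h2 := ZMod.val_cast_of_lt (n := t*(k-1)+2) (oneJT_lt ht hk hj.2)
  simp only [] at hij
  rw [hij] at h1
  rw [h1] at h2
  have ht0 : 0 < t := by omega
  have := Nat.eq_of_mul_eq_mul_right ht0 (by omega : i * t = j * t)
  omega

lemma GA'_adj_iff_mem (ht : 3 ≤ t) (hk : 3 ≤ k) [NeZero (t * (k-1) + 2)]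
    (a b : ZMod (t * (k-1) + 2)) :
    (GA' t k).Adj a b ↔ b - a ∈ Dfin t k := by
  rw [GA'_adj ht hk, mem_Dfin ht hk]


lemma key_bound (ht : 3 ≤ t) (hk : 3 ≤ k) [NeZero (t * (k-1) + 2)]
    (A B : Finset (ZMod (t * (k-1) + 2))) (hA : A.Nonempty) (hB : B.Nonempty)
    (hadj : ∀ a ∈ A, ∀ b ∈ B, (GA' t k).Adj a b) :
    A.card + B.card ≤ k - 1 := by
  classical
  obtain ⟨a0, ha0⟩ := hA
  obtain ⟨b0, hb0⟩ := hB
  set f : ZMod (t * (k-1) + 2) → ℕ := fun b => ((b - a0).val - 1) / t with hfdef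
  set g : ZMod (t * (k-1) + 2) → ℕ := fun a => ((b0 - a).val - 1) / t with hgdef
  have ht0 : 0 < t := by omega
  have hf : ∀ b ∈ B, (b - a0).val = 1 + f b * t ∧ 1 ≤ f b ∧ f b ≤ k-2 := by
    intro b hb
    obtain ⟨j, hj1, hj2, hj⟩ := (GA'_adj ht hk a0 b).1 (hadj a0 ha0 b hb)
    have : f b = j := by
      simp only [hfdef, hj, Nat.add_sub_cancel_left]
      rw [Nat.mul_comm]; exact Nat.mul_div_cancel_left _ ht0
    rw [this]; exact ⟨hj, hj1, hj2⟩
  have hg : ∀ a ∈ A, (b0 - a).val = 1 + g a * t ∧ 1 ≤ g a ∧ g a ≤ k-2 := by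
    intro a ha
    obtain ⟨j, hj1, hj2, hj⟩ := (GA'_adj ht hk a b0).1 (hadj a ha b0 hb0)
    have : g a = j := by
      simp only [hgdef, hj, Nat.add_sub_cancel_left]
      rw [Nat.mul_comm]; exact Nat.mul_div_cancel_left _ ht0
    rw [this]; exact ⟨hj, hj1, hj2⟩
  -- the key congruence
  have hkey : ∀ a ∈ A, ∀ b ∈ B, g a0 + 1 ≤ g a + f b ∧ g a + f b ≤ g a0 + (k-2) := by
    intro a ha b hb
    obtain ⟨m, hm1, hm2, hm⟩ := (GA'_adj ht hk a b).1 (hadj a ha b hb)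
    obtain ⟨hfb, hfb1, hfb2⟩ := hf b hb
    obtain ⟨hga, hga1, hga2⟩ := hg a ha
    obtain ⟨hg0, hg01, hg02⟩ := hg a0 ha0
    have hz : ((1 + m*t : ℕ) : ZMod (t * (k-1) + 2))
        = ((1 + f b * t : ℕ) : ZMod (t * (k-1) + 2))
          + ((1 + g a * t : ℕ) : ZMod (t * (k-1) + 2))
          - ((1 + g a0 * t : ℕ) : ZMod (t * (k-1) + 2)) := by
      rw [← hm, ← hfb, ← hga, ← hg0]
      rw [ZMod.natCast_zmod_val, ZMod.natCast_zmod_val, ZMod.natCast_zmod_val,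
        ZMod.natCast_zmod_val]
      ring
    have hz' : ((1 + m*t : ℤ) : ZMod (t * (k-1) + 2))
        = (((1 + f b * t) + (1 + g a * t) - (1 + g a0 * t) : ℤ) : ZMod (t * (k-1) + 2)) := by
      push_cast at hz ⊢
      linear_combination hz
    have hdvd : ((t * (k-1) + 2 : ℕ) : ℤ)
        ∣ ((1 + f b * t) + (1 + g a * t) - (1 + g a0 * t)) - (1 + m*t) :=
      (ZMod.intCast_eq_intCast_iff_dvd_sub _ _ _).1 hz'
    set e : ℤ := (f b : ℤ) + g a - g a0 - m with hedef
    have hdvd2 : ((t * (k-1) + 2 : ℕ) : ℤ) ∣ e * t := by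
      convert hdvd using 1; rw [hedef]; push_cast; ring
    have heq0 : e = 0 := by
      have c1 : (f b : ℤ) ≤ (k:ℤ) - 2 := by
        have h := hfb2
        have : ((k : ℕ) - 2 : ℕ) ≤ k - 2 := le_rfl
        omega
      have c2 : (g a : ℤ) ≤ (k:ℤ) - 2 := by have h := hga2; omega
      have c3 : (g a0 : ℤ) ≤ (k:ℤ) - 2 := by have h := hg02; omega
      have c4 : (m : ℤ) ≤ (k:ℤ) - 2 := by have h := hm2; omega
      have c5 : (1:ℤ) ≤ f b := by exact_mod_cast hfb1
      have c6 : (1:ℤ) ≤ g a := by exact_mod_cast hga1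
      have c7 : (1:ℤ) ≤ g a0 := by exact_mod_cast hg01
      have c8 : (1:ℤ) ≤ m := by exact_mod_cast hm1
      have hbound : |e| ≤ 2*(k:ℤ) - 6 := by
        rw [abs_le, hedef]
        constructor <;> omega
      rcases Nat.even_or_odd t with hev | hodd
      · obtain ⟨t', ht'⟩ := hev
        have ht'2 : 2 ≤ t' := by omega
        have hnn' : t * (k-1) + 2 = 2 * (t' * (k-1) + 1) := by rw [ht']; ring
        have hdvd3 : ((t' * (k-1) + 1 : ℕ) : ℤ) ∣ e * t' := by
          obtain ⟨c, hc⟩ := hdvd2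
          refine ⟨c, ?_⟩
          have h2e : (2:ℤ) * (e * t') = 2 * (((t' * (k-1) + 1 : ℕ) : ℤ) * c) := by
            calc (2:ℤ) * (e * t') = e * (t' + t') := by ring
            _ = e * t := by rw [ht']; push_cast; ring
            _ = ((t * (k-1) + 2 : ℕ) : ℤ) * c := hc
            _ = 2 * (((t' * (k-1) + 1 : ℕ) : ℤ) * c) := by rw [hnn']; push_cast; ring
          linarith [mul_left_cancel₀ (two_ne_zero (α := ℤ)) h2e]
        have hcop : IsCoprime ((t' * (k-1) + 1 : ℕ) : ℤ) ((t' : ℕ) : ℤ) := by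
          rw [Nat.isCoprime_iff_coprime]
          have hc : Nat.Coprime t' (t' * (k-1) + 1) := by
            rw [Nat.add_comm, Nat.coprime_add_mul_left_right t' 1 (k-1)]
            exact Nat.coprime_one_right t'
          exact hc.symm
        have hdvd4 : ((t' * (k-1) + 1 : ℕ) : ℤ) ∣ e := hcop.dvd_of_dvd_mul_right hdvd3
        apply Int.eq_zero_of_abs_lt_dvd hdvd4
        have h2 : 2 * ((k:ℤ)-1) ≤ (t':ℤ) * ((k:ℤ)-1) := by
          apply mul_le_mul_of_nonneg_right _ (by push_cast; omega)
          exact_mod_cast ht'2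
        have h3 : ((t' * (k-1) + 1 : ℕ) : ℤ) = (t':ℤ) * ((k:ℤ)-1) + 1 := by
          push_cast [Nat.cast_sub (by omega : 1 ≤ k)]; ring
        omega
      · have hcop : IsCoprime ((t * (k-1) + 2 : ℕ) : ℤ) ((t : ℕ) : ℤ) := by
          rw [Nat.isCoprime_iff_coprime]
          have hc : Nat.Coprime t (t * (k-1) + 2) := by
            rw [Nat.add_comm, Nat.coprime_add_mul_left_right t 2 (k-1)]
            exact (Nat.coprime_two_right).2 hodd
          exact hc.symm
        have hdvd4 : ((t * (k-1) + 2 : ℕ) : ℤ) ∣ e := hcop.dvd_of_dvd_mul_right hdvd2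
        apply Int.eq_zero_of_abs_lt_dvd hdvd4
        have h2 : 3 * ((k:ℤ)-1) ≤ (t:ℤ) * ((k:ℤ)-1) := by
          apply mul_le_mul_of_nonneg_right _ (by push_cast; omega)
          exact_mod_cast ht
        have h3 : ((t * (k-1) + 2 : ℕ) : ℤ) = (t:ℤ) * ((k:ℤ)-1) + 2 := by
          push_cast [Nat.cast_sub (by omega : 1 ≤ k)]; ring
        omega
    have hsum : g a + f b = m + g a0 := by
      have he : (f b : ℤ) + g a - g a0 - m = 0 := heq0
      omega
    omega
  -- injectivity
  have hginj : Set.InjOn g A := by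
    intro a ha a' ha' hgg
    have h1 := (hg a ha).1
    have h2 := (hg a' ha').1
    rw [hgg] at h1
    have h3 : (b0 - a) = (b0 - a') := ZMod.val_injective _ (by rw [h1, h2])
    exact sub_right_injective h3
  have hfinj : Set.InjOn f B := by
    intro b hb b' hb' hff
    have h1 := (hf b hb).1
    have h2 := (hf b' hb').1
    rw [hff] at h1
    have h3 : (b - a0) = (b' - a0) := ZMod.val_injective _ (by rw [h1, h2])
    exact sub_left_injective h3
  have hIcard : (A.image g).card = A.card := Finset.card_image_of_injOn hginj
  have hJcard : (B.image f).card = B.card := Finset.card_image_of_injOn hfinj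
  have hInne : (A.image g).Nonempty := ⟨g a0, Finset.mem_image_of_mem g ha0⟩
  have hJnne : (B.image f).Nonempty := ⟨f b0, Finset.mem_image_of_mem f hb0⟩
  obtain ⟨amin, hamin, hamin'⟩ := Finset.mem_image.1 ((A.image g).min'_mem hInne)
  obtain ⟨amax, hamax, hamax'⟩ := Finset.mem_image.1 ((A.image g).max'_mem hInne)
  obtain ⟨bmin, hbmin, hbmin'⟩ := Finset.mem_image.1 ((B.image f).min'_mem hJnne)
  obtain ⟨bmax, hbmax, hbmax'⟩ := Finset.mem_image.1 ((B.image f).max'_mem hJnne)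
  have hup : (A.image g).max' hInne + (B.image f).max' hJnne ≤ g a0 + (k-2) := by
    rw [← hamax', ← hbmax']; exact (hkey amax hamax bmax hbmax).2
  have hlo : g a0 + 1 ≤ (A.image g).min' hInne + (B.image f).min' hJnne := by
    rw [← hamin', ← hbmin']; exact (hkey amin hamin bmin hbmin).1
  have hIsub : (A.image g) ⊆ Finset.Icc ((A.image g).min' hInne) ((A.image g).max' hInne) :=
    fun x hx => Finset.mem_Icc.2 ⟨Finset.min'_le _ x hx, Finset.le_max' _ x hx⟩
  have hJsub : (B.image f) ⊆ Finset.Icc ((B.image f).min' hJnne) ((B.image f).max' hJnne) :=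
    fun x hx => Finset.mem_Icc.2 ⟨Finset.min'_le _ x hx, Finset.le_max' _ x hx⟩
  have hIle := Finset.card_le_card hIsub
  have hJle := Finset.card_le_card hJsub
  rw [Nat.card_Icc, hIcard] at hIle
  rw [Nat.card_Icc, hJcard] at hJle
  have hii : (A.image g).min' hInne ≤ (A.image g).max' hInne :=
    Finset.min'_le _ _ ((A.image g).max'_mem hInne)
  have hjj : (B.image f).min' hJnne ≤ (B.image f).max' hJnne :=
    Finset.min'_le _ _ ((B.image f).max'_mem hJnne)
  omega


lemma compl_neighborSet_eq (ht : 3 ≤ t) (hk : 3 ≤ k) [NeZero (t * (k-1) + 2)]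
    (v : ZMod (t * (k-1) + 2)) :
    ((GA' t k)ᶜ).neighborSet v = ↑((insert v ((Dfin t k).image (v + ·)))ᶜ) := by
  classical
  ext w
  simp only [SimpleGraph.mem_neighborSet, SimpleGraph.compl_adj, Finset.coe_compl,
    Set.mem_compl_iff, Finset.mem_coe, Finset.mem_insert, Finset.mem_image]
  rw [GA'_adj_iff_mem ht hk]
  constructor
  · rintro ⟨hne, hnmem⟩ (h | ⟨d, hd, hvd⟩)
    · exact hne h.symm
    · exact hnmem (by rwa [← hvd, add_sub_cancel_left])
  · intro h
    refine ⟨fun he => h (Or.inl he.symm), fun hmem => h (Or.inr ⟨w - v, hmem, by ring⟩)⟩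

lemma card_insert_Dfin (ht : 3 ≤ t) (hk : 3 ≤ k) [NeZero (t * (k-1) + 2)]
    (v : ZMod (t * (k-1) + 2)) :
    (insert v ((Dfin t k).image (v + ·))).card = k - 1 := by
  classical
  have hvnot : v ∉ (Dfin t k).image (v + ·) := by
    intro hmem
    obtain ⟨d, hd, hvd⟩ := Finset.mem_image.1 hmem
    have hd0 : d = 0 := by
      have : v + d = v + 0 := by rw [hvd, add_zero]
      exact add_left_cancel this
    obtain ⟨j, hj1, hj2, hj⟩ := (mem_Dfin ht hk d).1 hd
    rw [hd0, ZMod.val_zero] at hj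
    have := Nat.mul_pos (show 0 < j by omega) (show 0 < t by omega)
    omega
  rw [Finset.card_insert_of_notMem hvnot,
    Finset.card_image_of_injective _ (add_right_injective v), card_Dfin ht hk]
  omega

lemma compl_nbr_ncard (ht : 3 ≤ t) (hk : 3 ≤ k) [NeZero (t * (k-1) + 2)]
    (v : ZMod (t * (k-1) + 2)) :
    (((GA' t k)ᶜ).neighborSet v).ncard = (t-1) * (k-1) + 2 := by
  classical
  rw [compl_neighborSet_eq ht hk, Set.ncard_coe_finset, Finset.card_compl,
    card_insert_Dfin ht hk, ZMod.card]
  have h3k : 3*(k-1) ≤ t*(k-1) := Nat.mul_le_mul_right _ ht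
  have hsub : (t-1)*(k-1) + 1*(k-1) = t*(k-1) := by rw [← add_mul]; congr 1; omega
  have h1m : 1*(k-1) = k-1 := one_mul _
  omega

lemma card_insert_zero_Dfin (ht : 3 ≤ t) (hk : 3 ≤ k) [NeZero (t * (k-1) + 2)] :
    (insert (0 : ZMod (t * (k-1) + 2)) (Dfin t k)).card = k - 1 := by
  classical
  have h0 : (0 : ZMod (t * (k-1) + 2)) ∉ Dfin t k := by
    intro hmem
    obtain ⟨j, hj1, hj2, hj⟩ := (mem_Dfin ht hk _).1 hmem
    rw [ZMod.val_zero] at hj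
    have := Nat.mul_pos (show 0 < j by omega) (show 0 < t by omega)
    omega
  rw [Finset.card_insert_of_notMem h0, card_Dfin ht hk]
  omega

lemma notConn_witness (ht : 3 ≤ t) (hk : 3 ≤ k) [NeZero (t * (k-1) + 2)] :
    ¬ (SimpleGraph.induce (↑((insert (0 : ZMod (t * (k-1) + 2)) (Dfin t k))ᶜ))ᶜ
        ((GA' t k)ᶜ)).Connected := by
  classical
  set F : Finset (ZMod (t * (k-1) + 2)) := insert 0 (Dfin t k) with hF
  have hmem : ∀ w : ZMod (t * (k-1) + 2), w ∈ ((↑(Fᶜ) : Set _)ᶜ) ↔ w ∈ F := by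
    intro w; simp [Finset.coe_compl]
  have h0 : (0 : ZMod (t * (k-1) + 2)) ∈ F := Finset.mem_insert_self _ _
  have hy0d : ((1 + 1*t : ℕ) : ZMod (t * (k-1) + 2)) ∈ Dfin t k :=
    (mem_Dfin ht hk _).2 ⟨1, le_rfl, by omega, ZMod.val_cast_of_lt (oneJT_lt ht hk (by omega))⟩
  have hy0 : ((1 + 1*t : ℕ) : ZMod (t * (k-1) + 2)) ∈ F := Finset.mem_insert_of_mem hy0d
  set x0 : ↥((↑(Fᶜ) : Set (ZMod (t * (k-1) + 2)))ᶜ) := ⟨0, (hmem 0).2 h0⟩ with hx0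
  set y0 : ↥((↑(Fᶜ) : Set (ZMod (t * (k-1) + 2)))ᶜ) := ⟨_, (hmem _).2 hy0⟩ with hy0'
  have hne : x0 ≠ y0 := by
    intro h
    have hval := congrArg (fun z : ↥((↑(Fᶜ) : Set (ZMod (t * (k-1) + 2)))ᶜ) => z.1.val) h
    simp only [hx0, hy0'] at hval
    rw [ZMod.val_zero, ZMod.val_cast_of_lt (oneJT_lt ht hk (by omega))] at hval
    omega
  have claim : ∀ w, ¬ (SimpleGraph.induce (↑(Fᶜ) : Set _)ᶜ ((GA' t k)ᶜ)).Adj x0 w := by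
    intro w hadj
    have h2 : ((GA' t k)ᶜ).Adj 0 w.1 := hadj
    rw [SimpleGraph.compl_adj] at h2
    obtain ⟨hne2, hnadj⟩ := h2
    have hw : w.1 ∈ F := (hmem w.1).1 w.2
    rcases Finset.mem_insert.1 hw with h | h
    · exact hne2 h.symm
    · exact hnadj ((GA'_adj_iff_mem ht hk 0 w.1).2 (by rwa [sub_zero]))
  intro hconn
  obtain ⟨p⟩ := hconn.preconnected x0 y0
  have hgen : ∀ z, (SimpleGraph.induce (↑(Fᶜ) : Set _)ᶜ ((GA' t k)ᶜ)).Walk x0 z → x0 = z := by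
    intro z p
    cases p with
    | nil => rfl
    | cons h q => exact absurd h (claim _)
  exact hne (hgen y0 p)

lemma lower_bound (ht : 3 ≤ t) (hk : 3 ≤ k) [NeZero (t * (k-1) + 2)]
    (S : Finset (ZMod (t * (k-1) + 2)))
    (hno : ¬ (SimpleGraph.induce (↑S)ᶜ ((GA' t k)ᶜ)).Connected) :
    (t-1) * (k-1) + 2 ≤ S.card := by
  classical
  by_contra hlt
  push_neg at hlt
  have hcard : Fintype.card (ZMod (t * (k-1) + 2)) = t * (k-1) + 2 := ZMod.card _
  have h3k : 3*(k-1) ≤ t*(k-1) := Nat.mul_le_mul_right _ ht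
  have hsub : (t-1)*(k-1) + 1*(k-1) = t*(k-1) := by rw [← add_mul]; congr 1; omega
  have h1m : 1*(k-1) = k-1 := one_mul _
  have hSc : Sᶜ.card = t*(k-1)+2 - S.card := by rw [Finset.card_compl, hcard]
  have hSck : k ≤ Sᶜ.card := by omega
  obtain ⟨z, hz⟩ : Sᶜ.Nonempty := Finset.card_pos.1 (by omega)
  have hzmem : z ∈ ((↑S : Set (ZMod (t * (k-1) + 2)))ᶜ) := by
    simpa using Finset.mem_compl.1 hz
  haveI hne0 : Nonempty ↥((↑S : Set (ZMod (t * (k-1) + 2)))ᶜ) := ⟨⟨z, hzmem⟩⟩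
  have hpre : ¬ (SimpleGraph.induce (↑S)ᶜ ((GA' t k)ᶜ)).Preconnected := fun hp => hno ⟨hp⟩
  rw [SimpleGraph.Preconnected] at hpre
  push_neg at hpre
  obtain ⟨x, y, hxy⟩ := hpre
  obtain ⟨xv, hxv⟩ := x
  obtain ⟨yv, hyv⟩ := y
  set P : ZMod (t * (k-1) + 2) → Prop := fun w => ∃ hw : w ∈ ((↑S : Set _)ᶜ),
    (SimpleGraph.induce (↑S)ᶜ ((GA' t k)ᶜ)).Reachable ⟨xv, hxv⟩ ⟨w, hw⟩ with hP
  set A := Sᶜ.filter P with hA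
  set B := Sᶜ.filter (fun w => ¬ P w) with hB
  have hABcard : A.card + B.card = Sᶜ.card := Finset.card_filter_add_card_filter_not _
  have hxA : xv ∈ A := by
    refine Finset.mem_filter.2 ⟨Finset.mem_compl.2 hxv, ⟨hxv, SimpleGraph.Reachable.refl _⟩⟩
  have hyB : yv ∈ B := by
    refine Finset.mem_filter.2 ⟨Finset.mem_compl.2 hyv, ?_⟩
    rintro ⟨hw, hr⟩
    exact hxy hr
  have hadj : ∀ a ∈ A, ∀ b ∈ B, (GA' t k).Adj a b := by
    intro a ha b hb
    obtain ⟨haS, haC, hra⟩ := Finset.mem_filter.1 ha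
    obtain ⟨hbS, hnPb⟩ := Finset.mem_filter.1 hb
    have hbC : b ∈ ((↑S : Set (ZMod (t * (k-1) + 2)))ᶜ) := by
      simpa using Finset.mem_compl.1 hbS
    have hneq : a ≠ b := by
      rintro rfl
      exact hnPb ⟨haC, hra⟩
    by_contra hnadj
    have hcadj : ((GA' t k)ᶜ).Adj a b := (SimpleGraph.compl_adj _ _ _).2 ⟨hneq, hnadj⟩
    have hiadj : (SimpleGraph.induce (↑S)ᶜ ((GA' t k)ᶜ)).Adj ⟨a, haC⟩ ⟨b, hbC⟩ := hcadj
    exact hnPb ⟨hbC, hra.trans hiadj.reachable⟩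
  have hkb := key_bound ht hk A B ⟨xv, hxA⟩ ⟨yv, hyB⟩ hadj
  omega

end

/-- The vertex connectivity of the complement of `GA(t,k)'` equals `(t-1)(k-1)+2`;
moreover the complement is κ-optimal: its vertex connectivity equals its minimum
degree (it is `((t-1)(k-1)+2)`-regular). -/
theorem stmt_13 (t k : ℕ) (ht : 3 ≤ t) (hk : 3 ≤ k) :
    letI : NeZero (t * (k - 1) + 2) := ⟨by omega⟩
    vConn ((GA' t k)ᶜ) = (t - 1) * (k - 1) + 2 ∧
    ∀ v : ZMod (t * (k - 1) + 2),
      (((GA' t k)ᶜ).neighborSet v).ncard = (t - 1) * (k - 1) + 2 := by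
  haveI : NeZero (t * (k - 1) + 2) := ⟨by omega⟩
  classical
  have hcard : Fintype.card (ZMod (t * (k-1) + 2)) = t * (k-1) + 2 := ZMod.card _
  have h3k : 3*(k-1) ≤ t*(k-1) := Nat.mul_le_mul_right _ ht
  have hsub : (t-1)*(k-1) + 1*(k-1) = t*(k-1) := by rw [← add_mul]; congr 1; omega
  have h1m : 1*(k-1) = k-1 := one_mul _
  have hS0card : ((insert (0 : ZMod (t * (k-1) + 2)) (Dfin t k))ᶜ).card
      = (t-1) * (k-1) + 2 := by
    rw [Finset.card_compl, card_insert_zero_Dfin ht hk, hcard]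
    omega
  have hmemJ : (t-1) * (k-1) + 2 ∈
      ({m | ∃ S : Finset (ZMod (t * (k-1) + 2)), S.card = m ∧
        ¬ (SimpleGraph.induce (↑S)ᶜ ((GA' t k)ᶜ)).Connected}
        ∪ {Fintype.card (ZMod (t * (k-1) + 2)) - 1}) :=
    Or.inl ⟨_, hS0card, notConn_witness ht hk⟩
  refine ⟨?_, fun v => compl_nbr_ncard ht hk v⟩
  rw [vConn]
  apply le_antisymm
  · exact Nat.sInf_le hmemJ
  · apply le_csInf ⟨_, hmemJ⟩
    rintro m (⟨S, rfl, hS⟩ | hm)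
    · exact lower_bound ht hk S hS
    · simp only [Set.mem_singleton_iff] at hm
      subst hm
      rw [hcard]
      omega
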